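/- arXiv:1411.5803 — 3 statements merged into one kernel-verified Lean document; each statement's English description precedes it below -/
import Mathlib

section
/- Let W be a real random variable and f: ℝ → ℝ be continuously differentiable with f' nonnegative and nondecreasing (so that θ ↦ W·f'(θW) is nondecreasing in θ for each realization), and suppose E[|W·f'(θ*W)|] < ∞ for some θ* > 0. Then for every θ ∈ [0, θ*], the expected oscillation E[sup_{θ̄ ∈ B_δ(θ)} W f'(θ̄ W) − inf_{θ̄ ∈ B_δ(θ)} W f'(θ̄ W)] tends to 0 as δ → 0. -/
open MeasureTheory Filter Set

/-- expected oscillation of `θ ↦ W f'(θW)` over small balls tends to 0. -/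
theorem expected_oscillation_tendsto_zero
    {Ω : Type*} [MeasurableSpace Ω] (μ : Measure Ω) [IsProbabilityMeasure μ]
    (W : Ω → ℝ) (f : ℝ → ℝ) (θstar : ℝ)
    (hθstar : 0 < θstar)
    (hf : ContDiff ℝ 1 f)
    (hf'_nonneg : ∀ x, 0 ≤ deriv f x)
    (hf'_mono : Monotone (deriv f))
    (hint : Integrable (fun ω => |W ω * deriv f (θstar * W ω)|) μ) :
    ∀ θ ∈ Icc (0 : ℝ) θstar,
      Tendsto
        (fun δ : ℝ =>
          ∫ ω : Ω,
            (sSup ((fun θbar => W ω * deriv f (θbar * W ω)) ''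
                (Metric.closedBall θ δ ∩ Icc (0 : ℝ) θstar)) -
             sInf ((fun θbar => W ω * deriv f (θbar * W ω)) ''
                (Metric.closedBall θ δ ∩ Icc (0 : ℝ) θstar))) ∂μ)
        (nhdsWithin 0 (Ioi 0)) (nhds 0) := by
  intro θ hθ
  obtain ⟨hθ0, hθs⟩ := hθ
  have hf'cont : Continuous (deriv f) := hf.continuous_deriv le_rfl
  -- monotonicity of t ↦ w * f'(t*w)
  have hmono : ∀ w : ℝ, Monotone (fun t : ℝ => w * deriv f (t * w)) := by
    intro w t₁ t₂ ht
    rcases le_or_gt 0 w with hw | hw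
    · exact mul_le_mul_of_nonneg_left (hf'_mono (mul_le_mul_of_nonneg_right ht hw)) hw
    · exact mul_le_mul_of_nonpos_left (hf'_mono (by nlinarith)) hw.le
  set G : ℝ → Ω → ℝ := fun δ ω =>
    W ω * deriv f (min (θ + δ) θstar * W ω) - W ω * deriv f (max (θ - δ) 0 * W ω) with hGdef
  have hGmono : ∀ ω, ∀ δ₁ δ₂ : ℝ, δ₁ ≤ δ₂ → G δ₁ ω ≤ G δ₂ ω := by
    intro ω δ₁ δ₂ h
    exact sub_le_sub (hmono (W ω) (min_le_min (by linarith) le_rfl))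
      (hmono (W ω) (max_le_max (by linarith) le_rfl))
  have hGzero : ∀ ω, G 0 ω = 0 := by
    intro ω
    simp only [hGdef, add_zero, sub_zero, min_eq_left hθs, max_eq_left hθ0, sub_self]
  have hGnonneg : ∀ δ : ℝ, 0 ≤ δ → ∀ ω, 0 ≤ G δ ω := by
    intro δ hδ ω
    have := hGmono ω 0 δ hδ
    rw [hGzero ω] at this
    exact this
  have hGcont : ∀ ω, Continuous (fun δ : ℝ => G δ ω) := by
    intro ω
    apply Continuous.sub
    · exact continuous_const.mul (hf'cont.comp
        (((continuous_const.add continuous_id).min continuous_const).mul continuous_const))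
    · exact continuous_const.mul (hf'cont.comp
        (((continuous_const.sub continuous_id).max continuous_const).mul continuous_const))
  have hGlim : ∀ ω, Tendsto (fun δ : ℝ => G δ ω) (nhds 0) (nhds 0) := by
    intro ω
    have := (hGcont ω).tendsto 0
    rwa [hGzero ω] at this
  -- key: the oscillation equals G δ ω
  have key : ∀ δ : ℝ, 0 < δ → ∀ ω : Ω,
      sSup ((fun θbar => W ω * deriv f (θbar * W ω)) ''
          (Metric.closedBall θ δ ∩ Icc (0 : ℝ) θstar)) -
        sInf ((fun θbar => W ω * deriv f (θbar * W ω)) ''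
          (Metric.closedBall θ δ ∩ Icc (0 : ℝ) θstar)) = G δ ω := by
    intro δ hδ ω
    have hset : Metric.closedBall θ δ ∩ Icc (0 : ℝ) θstar
        = Icc (max (θ - δ) 0) (min (θ + δ) θstar) := by
      rw [Real.closedBall_eq_Icc, Icc_inter_Icc]
    have hab : max (θ - δ) 0 ≤ min (θ + δ) θstar :=
      le_trans (max_le (by linarith) hθ0) (le_min (by linarith) hθs)
    rw [hset]
    have hgr : IsGreatest ((fun θbar => W ω * deriv f (θbar * W ω)) ''
        Icc (max (θ - δ) 0) (min (θ + δ) θstar))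
        (W ω * deriv f (min (θ + δ) θstar * W ω)) := by
      constructor
      · exact mem_image_of_mem _ (right_mem_Icc.2 hab)
      · rintro y ⟨t, ht, rfl⟩
        exact hmono (W ω) ht.2
    have hls : IsLeast ((fun θbar => W ω * deriv f (θbar * W ω)) ''
        Icc (max (θ - δ) 0) (min (θ + δ) θstar))
        (W ω * deriv f (max (θ - δ) 0 * W ω)) := by
      constructor
      · exact mem_image_of_mem _ (left_mem_Icc.2 hab)
      · rintro y ⟨t, ht, rfl⟩
        exact hmono (W ω) ht.1
    rw [hgr.csSup_eq, hls.csInf_eq]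
  -- reduce to showing the statement for G
  have main : Tendsto (fun δ : ℝ => ∫ ω, G δ ω ∂μ) (nhdsWithin 0 (Ioi 0)) (nhds 0) := by
    rw [NormedAddCommGroup.tendsto_nhds_zero]
    intro ε hε
    by_cases hD : ∀ c : ℝ, 0 < c → ∃ δ ∈ Ioo (0 : ℝ) c, Integrable (G δ) μ
    · -- integrable case: dominated convergence along a sequence
      obtain ⟨c₀, hc₀mem, hc₀int⟩ := hD 1 one_pos
      have hc₀pos : 0 < c₀ := hc₀mem.1
      choose u hu huint using fun n : ℕ =>
        hD (min c₀ (1 / (n + 1))) (lt_min hc₀pos (by positivity))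
      have hupos : ∀ n, 0 < u n := fun n => (hu n).1
      have hule : ∀ n, u n ≤ c₀ := fun n => le_of_lt (lt_of_lt_of_le (hu n).2 (min_le_left _ _))
      have hulim : Tendsto u atTop (nhds 0) := by
        have h1 : Tendsto (fun n : ℕ => 1 / ((n : ℝ) + 1)) atTop (nhds 0) :=
          tendsto_one_div_add_atTop_nhds_zero_nat
        refine tendsto_of_tendsto_of_tendsto_of_le_of_le tendsto_const_nhds h1
          (fun n => (hupos n).le)
          (fun n => le_of_lt (lt_of_lt_of_le (hu n).2 (min_le_right _ _)))
      have hDCT : Tendsto (fun n => ∫ ω, G (u n) ω ∂μ) atTop (nhds 0) := by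
        have := tendsto_integral_of_dominated_convergence (μ := μ)
          (F := fun n ω => G (u n) ω) (f := fun _ => (0 : ℝ)) (bound := G c₀)
          (fun n => (huint n).aestronglyMeasurable) hc₀int
          (fun n => Filter.Eventually.of_forall fun ω => by
            rw [Real.norm_eq_abs, abs_of_nonneg (hGnonneg _ (hupos n).le ω)]
            exact hGmono ω _ _ (hule n))
          (Filter.Eventually.of_forall fun ω => (hGlim ω).comp hulim)
        rwa [integral_zero] at this
      have hnn : ∀ δ : ℝ, 0 < δ → 0 ≤ ∫ ω, G δ ω ∂μ := fun δ hδ =>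
        integral_nonneg (hGnonneg δ hδ.le)
      rw [NormedAddCommGroup.tendsto_nhds_zero] at hDCT
      obtain ⟨N, hN⟩ := (hDCT ε hε).exists
      have hmem : Ioo (0 : ℝ) (u N) ∈ nhdsWithin (0 : ℝ) (Ioi 0) :=
        Ioo_mem_nhdsGT_of_mem (by constructor <;> simp [hupos N])
      filter_upwards [hmem] with δ hδ
      rw [Real.norm_eq_abs, abs_of_nonneg (hnn δ hδ.1)]
      by_cases hI : Integrable (G δ) μ
      · calc ∫ ω, G δ ω ∂μ ≤ ∫ ω, G (u N) ω ∂μ :=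
              integral_mono hI (huint N) (fun ω => hGmono ω _ _ hδ.2.le)
          _ < ε := by
              rw [Real.norm_eq_abs, abs_of_nonneg (hnn (u N) (hupos N))] at hN
              exact hN
      · rw [integral_undef hI]; exact hε
    · -- non-integrable case: all integrals are junk 0 near 0
      push_neg at hD
      obtain ⟨c, hc, hcnone⟩ := hD
      have hmem : Ioo (0 : ℝ) c ∈ nhdsWithin (0 : ℝ) (Ioi 0) :=
        Ioo_mem_nhdsGT_of_mem (by constructor <;> simp [hc])
      filter_upwards [hmem] with δ hδ
      rw [integral_undef (hcnone δ hδ)]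
      simpa using hε
  refine main.congr' ?_
  filter_upwards [self_mem_nhdsWithin] with δ hδ
  have : ∀ ω, G δ ω = sSup ((fun θbar => W ω * deriv f (θbar * W ω)) ''
        (Metric.closedBall θ δ ∩ Icc (0 : ℝ) θstar)) -
      sInf ((fun θbar => W ω * deriv f (θbar * W ω)) ''
        (Metric.closedBall θ δ ∩ Icc (0 : ℝ) θstar)) :=
    fun ω => (key δ hδ ω).symm
  simp only [this]
end

section
/- Let φ be the characteristic function of a real random variable Z that is not concentrated at one point and not lattice-valued (i.e., |φ(ζ)| < 1 for all ζ ≠ 0), with moment generating function M(θ) = E[e^{θZ}] finite for all real θ. Then for all 0 < δ₁ < δ₂ < ∞, 0 < K < ∞ and θ* > 0, there exists ρ ∈ (0,1) such that for all θ ∈ [0, θ*], all t with δ₁ ≤ |t| ≤ δ₂θ*, and all w with 1/K ≤ |w| ≤ K, one has |M(w(θ + it))| / M(wθ) ≤ 1 − ρ. -/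
/-!
Tilting `μ` by `exp (z.re * X)` turns `complexMGF X μ z / mgf X μ z.re` into the characteristic
function of `X` at `z.im` under an equivalent probability measure. By strict convexity of the
complex norm it has norm `< 1`, unless `exp (i z.im X)` is a.e. constant, in which case the
characteristic function of `X` under `μ` itself would have norm `1` at `z.im`. The ratio is
continuous in `(θ, t, w)`, so its maximum over the compact parameter set is still `< 1`.
-/

open MeasureTheory Set Complex ProbabilityTheory

namespace ProbabilityTheory

variable {Ω : Type*} {mΩ : MeasurableSpace Ω} {μ : Measure Ω} {X : Ω → ℝ}

lemma continuous_complexMGF (h : ∀ t, Integrable (fun ω ↦ Real.exp (t * X ω)) μ) :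
    Continuous (complexMGF X μ) := by
  have hX : integrableExpSet X μ = univ := eq_univ_of_forall h
  rw [← continuousOn_univ]
  simpa [hX] using (analyticOnNhd_complexMGF (X := X) (μ := μ)).continuousOn

lemma complexMGF_eq_mgf_mul_integral_tilted [NeZero μ] (z : ℂ)
    (hz : Integrable (fun ω ↦ Real.exp (z.re * X ω)) μ) :
    complexMGF X μ z =
      mgf X μ z.re * ∫ ω, cexp (z.im * I * X ω) ∂μ.tilted (z.re * X ·) := by
  have hM : (mgf X μ z.re : ℂ) ≠ 0 := ofReal_ne_zero.mpr (mgf_pos' (NeZero.ne μ) hz).ne'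
  have hsplit (ω : Ω) : (Real.exp (z.re * X ω) / mgf X μ z.re) • cexp (z.im * I * X ω)
      = (mgf X μ z.re : ℂ)⁻¹ * cexp (z * X ω) := by
    rw [Complex.real_smul, ofReal_div, ofReal_exp, div_mul_eq_mul_div, ← Complex.exp_add,
      div_eq_inv_mul]
    congr 2
    conv_rhs => rw [← re_add_im z]
    push_cast
    ring
  simp_rw [integral_tilted_mul_eq_mgf, hsplit, integral_const_mul, mul_inv_cancel_left₀ hM]
  rfl

lemma norm_complexMGF_lt_mgf [IsProbabilityMeasure μ] {z : ℂ}
    (hz : Integrable (fun ω ↦ Real.exp (z.re * X ω)) μ)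
    (hchar : ‖complexMGF X μ (z.im * I)‖ < 1) :
    ‖complexMGF X μ z‖ < mgf X μ z.re := by
  have := isProbabilityMeasure_tilted hz
  have hM := mgf_pos hz
  rcases ae_eq_const_or_norm_integral_lt_of_norm_le_const (C := 1)
    (μ := μ.tilted (z.re * X ·)) (f := fun ω ↦ cexp (z.im * I * X ω))
    (ae_of_all _ fun ω ↦ by simp [norm_exp]) with hconst | hlt
  · exfalso
    set c := ⨍ ω, cexp (z.im * I * X ω) ∂μ.tilted (z.re * X ·)
    have hconst_μ : (fun ω ↦ cexp (z.im * I * X ω)) =ᵐ[μ] fun _ ↦ c :=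
      (absolutelyContinuous_tilted hz).ae_le hconst
    have hc : ‖c‖ = 1 := by
      obtain ⟨ω, hω⟩ := hconst_μ.exists
      simp [← hω, norm_exp]
    have hchar_eq : complexMGF X μ (z.im * I) = c := by
      simp_rw [complexMGF, integral_congr_ae hconst_μ, integral_const, probReal_univ, one_smul]
    exact hchar.ne (by rw [hchar_eq, hc])
  · rw [probReal_univ, one_mul] at hlt
    rw [complexMGF_eq_mgf_mul_integral_tilted z hz, norm_mul, norm_real, Real.norm_of_nonneg hM.le]
    exact mul_lt_of_lt_one_right hM hlt

end ProbabilityTheory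

lemma IsCompact.exists_pos_forall_le_one_sub {α : Type*} [TopologicalSpace α] {s : Set α}
    (hs : IsCompact s) {f : α → ℝ} (hf : ContinuousOn f s) (hlt : ∀ x ∈ s, f x < 1) :
    ∃ ρ ∈ Ioo (0 : ℝ) 1, ∀ x ∈ s, f x ≤ 1 - ρ := by
  rcases s.eq_empty_or_nonempty with rfl | hne
  · exact ⟨1 / 2, by norm_num, by simp⟩
  obtain ⟨x₀, hx₀, hmax⟩ := hs.exists_isMaxOn hne hf
  have hx₀_lt := hlt x₀ hx₀
  refine ⟨min (1 - f x₀) (1 / 2), ⟨by positivity, by norm_num [min_le_right]⟩, fun x hx ↦ ?_⟩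
  linarith [isMaxOn_iff.mp hmax x hx, min_le_left (1 - f x₀) (1 / 2)]

theorem mgf_ratio_bounded_away_from_one_general
    {Ω : Type*} [MeasurableSpace Ω] (μ : Measure Ω) [IsProbabilityMeasure μ]
    (Z : Ω → ℝ)
    (hmgf : ∀ θ : ℝ, Integrable (fun ω => Real.exp (θ * Z ω)) μ)
    (hnonlattice : ∀ ζ : ℝ, ζ ≠ 0 →
      ‖∫ ω, Complex.exp (Complex.I * (ζ : ℂ) * (Z ω : ℂ)) ∂μ‖ < 1)
    (δ₁ δ₂ K θstar : ℝ) (hδ₁ : 0 < δ₁) (hK : 0 < K) :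
    ∃ ρ ∈ Ioo (0 : ℝ) 1, ∀ θ ∈ Icc (0 : ℝ) θstar, ∀ t : ℝ,
      δ₁ ≤ |t| → |t| ≤ δ₂ * θstar → ∀ w : ℝ, 1 / K ≤ |w| → |w| ≤ K →
        ‖∫ ω, Complex.exp ((w : ℂ) * ((θ : ℂ) + (t : ℂ) * Complex.I) * (Z ω : ℂ)) ∂μ‖
          / (∫ ω, Real.exp (w * θ * Z ω) ∂μ) ≤ 1 - ρ := by
  let ratio (p : ℝ × ℝ × ℝ) : ℝ :=
    ‖complexMGF Z μ (p.2.2 * (p.1 + p.2.1 * I))‖ / mgf Z μ (p.2.2 * p.1)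
  let S : Set (ℝ × ℝ × ℝ) := Icc 0 θstar ×ˢ
    (Metric.closedBall 0 (δ₂ * θstar) \ Metric.ball 0 δ₁) ×ˢ
    (Metric.closedBall 0 K \ Metric.ball 0 (1 / K))
  have hS : IsCompact S := isCompact_Icc.prod
    (((isCompact_closedBall _ _).diff Metric.isOpen_ball).prod
      ((isCompact_closedBall _ _).diff Metric.isOpen_ball))
  have hcont : Continuous ratio :=
    ((continuous_complexMGF hmgf).comp (by fun_prop)).norm.div
      ((continuous_mgf hmgf).comp (by fun_prop)) fun _ ↦ (mgf_pos (hmgf _)).ne'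
  have hlt : ∀ p ∈ S, ratio p < 1 := by
    rintro ⟨θ, t, w⟩ ⟨-, ht, hw⟩
    have ht0 : t ≠ 0 := by rintro rfl; simp_all
    have hw0 : w ≠ 0 := by rintro rfl; simp_all
    have key := norm_complexMGF_lt_mgf (X := Z) (μ := μ) (z := w * (θ + t * I))
      (by simpa using hmgf (w * θ))
      (by simpa [complexMGF, mul_comm, mul_left_comm] using
        hnonlattice (w * t) (mul_ne_zero hw0 ht0))
    simpa using (div_lt_one (mgf_pos (hmgf _))).mpr key
  obtain ⟨ρ, hρ, hbound⟩ := hS.exists_pos_forall_le_one_sub hcont.continuousOn hlt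
  refine ⟨ρ, hρ, fun θ hθ t ht₁ ht₂ w hw₁ hw₂ ↦ hbound (θ, t, w) ?_⟩
  exact ⟨hθ, by simp [ht₁, ht₂], by simpa [hw₂] using hw₁⟩

/-- uniform bound away from 1 for the ratio of the (complex) moment generating
function for non-lattice, non-degenerate `Z`. -/
theorem mgf_ratio_bounded_away_from_one
    {Ω : Type*} [MeasurableSpace Ω] (μ : Measure Ω) [IsProbabilityMeasure μ]
    (Z : Ω → ℝ) (hZmeas : Measurable Z)
    (hnondeg : ¬∃ z : ℝ, ∀ᵐ ω ∂μ, Z ω = z)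
    (hmgf : ∀ θ : ℝ, Integrable (fun ω => Real.exp (θ * Z ω)) μ)
    (hnonlattice : ∀ ζ : ℝ, ζ ≠ 0 →
      ‖∫ ω, Complex.exp (Complex.I * (ζ : ℂ) * (Z ω : ℂ)) ∂μ‖ < 1)
    (δ₁ δ₂ K θstar : ℝ) (hδ₁ : 0 < δ₁) (hδ : δ₁ < δ₂) (hK : 0 < K) (hθstar : 0 < θstar) :
    ∃ ρ ∈ Ioo (0 : ℝ) 1, ∀ θ ∈ Icc (0 : ℝ) θstar, ∀ t : ℝ,
      δ₁ ≤ |t| → |t| ≤ δ₂ * θstar → ∀ w : ℝ, 1 / K ≤ |w| → |w| ≤ K →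
        ‖∫ ω, Complex.exp ((w : ℂ) * ((θ : ℂ) + (t : ℂ) * Complex.I) * (Z ω : ℂ)) ∂μ‖
          / (∫ ω, Real.exp (w * θ * Z ω) ∂μ) ≤ 1 - ρ :=
  mgf_ratio_bounded_away_from_one_general μ Z hmgf hnonlattice δ₁ δ₂ K θstar hδ₁ hK
end

section
/- Let W, W_1, ..., W_K be i.i.d. real random variables whose distribution has an absolutely continuous part on an interval [c,d] with density bounded below by p > 0, and let δ̃ > 0 satisfy d − c − 4δ̃ > 0. Then P(W ∈ [c,d] and |W − W_i| > 2δ̃ for all i = 1, ..., K) ≥ (d−c) p^{K+1} (d−c−4δ̃)^K > 0. -/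
open MeasureTheory ProbabilityTheory Set

/-!
Let `ν` be the common law. By independence the joint law of `(W, W₁, …, W_K)` is `ν^{⊗(K+1)}`,
so by Fubini the probability equals `∫_{[c,d]} ν{t : |x - t| > 2δ̃}^K dν(x)`. For every `x` the set
`{t : |x - t| > 2δ̃}` contains `[c,d]` minus an interval of length `4δ̃`, so the density bound gives
`ν{t : |x - t| > 2δ̃} ≥ p (d - c - 4δ̃)`, while `ν[c,d] ≥ p (d - c)`.
-/

/-- The paper's "absolutely continuous part on `s` with density at least `p`". -/
def HasDensityLowerBoundOn (ν : Measure ℝ) (p : ℝ) (s : Set ℝ) : Prop :=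
  ∀ t, MeasurableSet t → t ⊆ s → ENNReal.ofReal p * volume t ≤ ν t

theorem HasDensityLowerBoundOn.le_measure_compl_closedBall {ν : Measure ℝ} {p c d : ℝ}
    (h : HasDensityLowerBoundOn ν p (Icc c d)) (hp : 0 ≤ p) (x : ℝ) {r : ℝ} (hr : 0 ≤ r) :
    ENNReal.ofReal (p * (d - c - 2 * r)) ≤ ν (Metric.closedBall x r)ᶜ := by
  have hvol : ENNReal.ofReal (d - c - 2 * r) ≤ volume (Icc c d \ Metric.closedBall x r) := by
    calc ENNReal.ofReal (d - c - 2 * r)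
        = volume (Icc c d) - volume (Metric.closedBall x r) := by
          rw [Real.volume_Icc, Real.volume_closedBall, ENNReal.ofReal_sub _ (by positivity)]
      _ ≤ _ := le_measure_sdiff
  calc ENNReal.ofReal (p * (d - c - 2 * r))
      = ENNReal.ofReal p * ENNReal.ofReal (d - c - 2 * r) := ENNReal.ofReal_mul hp
    _ ≤ ENNReal.ofReal p * volume (Icc c d \ Metric.closedBall x r) := by gcongr
    _ ≤ ν (Icc c d \ Metric.closedBall x r) :=
        h _ (measurableSet_Icc.diff Metric.isClosed_closedBall.measurableSet) sdiff_subset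
    _ ≤ ν (Metric.closedBall x r)ᶜ := measure_mono fun _ ht => ht.2

theorem Measure.pi_setOf_fin_succ_eq_setLIntegral {α : Type*} [MeasurableSpace α]
    (ν : Measure α) [SigmaFinite ν] (K : ℕ) {A : Set α} {R : α → α → Prop}
    (hA : MeasurableSet A) (hR : MeasurableSet {q : α × α | R q.1 q.2}) :
    Measure.pi (fun _ : Fin (K + 1) => ν) {x | x 0 ∈ A ∧ ∀ i : Fin K, R (x 0) (x i.succ)} =
      ∫⁻ a in A, ν {b | R a b} ^ K ∂ν := by
  set F : Set (α × (Fin K → α)) := {q | q.1 ∈ A ∧ ∀ i, R q.1 (q.2 i)}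
  have hF : MeasurableSet F := by
    simp only [F, ofPred_and, ofPred_forall]
    exact (measurable_fst hA).inter <| .iInter fun i =>
      (show Measurable fun q : α × (Fin K → α) => (q.1, q.2 i) by fun_prop) hR
  have hpre : {x : Fin (K + 1) → α | x 0 ∈ A ∧ ∀ i : Fin K, R (x 0) (x i.succ)} =
      MeasurableEquiv.piFinSuccAbove (fun _ => α) 0 ⁻¹' F := by
    ext x
    simp [F, MeasurableEquiv.piFinSuccAbove, Fin.tail]
  rw [hpre, (measurePreserving_piFinSuccAbove (fun _ => ν) 0).measure_preimage_equiv,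
    Measure.prod_apply hF, ← lintegral_indicator hA]
  refine lintegral_congr fun a => ?_
  by_cases ha : a ∈ A
  · have hslice : Prod.mk a ⁻¹' F = univ.pi fun _ => {b | R a b} := by
      ext y
      simp [F, ha]
    simp [hslice, ha, Measure.pi_pi]
  · have hslice : Prod.mk a ⁻¹' F = ∅ := by
      ext y
      simp [F, ha]
    simp [hslice, ha]

theorem measurableSet_setOf_fin_succ {α : Type*} [MeasurableSpace α] (K : ℕ) {A : Set α}
    {R : α → α → Prop} (hA : MeasurableSet A) (hR : MeasurableSet {q : α × α | R q.1 q.2}) :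
    MeasurableSet {x : Fin (K + 1) → α | x 0 ∈ A ∧ ∀ i : Fin K, R (x 0) (x i.succ)} := by
  rw [ofPred_and, ofPred_forall]
  exact (measurable_pi_apply 0 hA).inter <| .iInter fun i =>
    (show Measurable fun x : Fin (K + 1) → α => (x 0, x i.succ) by fun_prop) hR

theorem iIndepFun.map_fun_eq_pi_of_map_eq {Ω : Type*} [MeasurableSpace Ω] {μ : Measure Ω}
    {ι β : Type*} [Fintype ι] [MeasurableSpace β] {V : ι → Ω → β} (i₀ : ι)
    (hmeas : ∀ i, AEMeasurable (V i) μ) (hindep : iIndepFun V μ)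
    (hident : ∀ i, μ.map (V i) = μ.map (V i₀)) :
    μ.map (fun ω i => V i ω) = Measure.pi fun _ : ι => μ.map (V i₀) := by
  rw [hindep.map_fun_eq_pi_map hmeas]
  simp only [hident]

theorem HasDensityLowerBoundOn.ofReal_le_measure_pi_gap {ν : Measure ℝ} [SigmaFinite ν]
    {p c d r : ℝ} (h : HasDensityLowerBoundOn ν p (Icc c d)) (hp : 0 ≤ p) (hr : 0 ≤ r)
    (hgap : 0 ≤ d - c - 2 * r) (K : ℕ) :
    ENNReal.ofReal ((d - c) * p ^ (K + 1) * (d - c - 2 * r) ^ K) ≤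
      Measure.pi (fun _ : Fin (K + 1) => ν)
        {x | x 0 ∈ Icc c d ∧ ∀ i : Fin K, r < dist (x 0) (x i.succ)} := by
  have hR : MeasurableSet {q : ℝ × ℝ | r < dist q.1 q.2} :=
    measurableSet_lt measurable_const continuous_dist.measurable
  have hIcc : ENNReal.ofReal (p * (d - c)) ≤ ν (Icc c d) := by
    simpa [Real.volume_Icc, ENNReal.ofReal_mul hp] using h _ measurableSet_Icc subset_rfl
  have hslice (x : ℝ) : ENNReal.ofReal (p * (d - c - 2 * r)) ≤ ν {t | r < dist x t} := by
    convert h.le_measure_compl_closedBall hp x hr using 2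
    ext t
    simp [dist_comm]
  calc ENNReal.ofReal ((d - c) * p ^ (K + 1) * (d - c - 2 * r) ^ K)
      = ENNReal.ofReal (p * (d - c)) * ENNReal.ofReal (p * (d - c - 2 * r)) ^ K := by
        rw [← ENNReal.ofReal_pow (by positivity), ← ENNReal.ofReal_mul (by nlinarith), mul_pow]
        congr 1
        ring
    _ ≤ ν (Icc c d) * ENNReal.ofReal (p * (d - c - 2 * r)) ^ K := by gcongr
    _ = ∫⁻ _ in Icc c d, ENNReal.ofReal (p * (d - c - 2 * r)) ^ K ∂ν := by
        rw [setLIntegral_const, mul_comm]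
    _ ≤ ∫⁻ x in Icc c d, ν {t | r < dist x t} ^ K ∂ν :=
        lintegral_mono fun x => pow_le_pow_left' (hslice x) K
    _ = _ := (Measure.pi_setOf_fin_succ_eq_setLIntegral ν K measurableSet_Icc hR).symm

theorem gap_probability_lower_bound_general
    {Ω : Type*} [MeasurableSpace Ω] (μ : Measure Ω) [IsProbabilityMeasure μ]
    (K : ℕ) (V : Fin (K + 1) → Ω → ℝ) (c d p δt : ℝ)
    (hmeas : ∀ i, Measurable (V i))
    (hindep : iIndepFun V μ)
    (hident : ∀ i, Measure.map (V i) μ = Measure.map (V 0) μ)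
    (hp : 0 < p)
    (hdens : ∀ s : Set ℝ, MeasurableSet s → s ⊆ Icc c d →
      ENNReal.ofReal p * volume s ≤ Measure.map (V 0) μ s)
    (hδt : 0 < δt) (hgap : 0 < d - c - 4 * δt) :
    (d - c) * p ^ (K + 1) * (d - c - 4 * δt) ^ K ≤
      (μ {ω | V 0 ω ∈ Icc c d ∧ ∀ i : Fin K, 2 * δt < |V 0 ω - V i.succ ω|}).toReal ∧
    0 < (μ {ω | V 0 ω ∈ Icc c d ∧ ∀ i : Fin K, 2 * δt < |V 0 ω - V i.succ ω|}).toReal := by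
  set ν := μ.map (V 0)
  have : IsProbabilityMeasure ν := Measure.isProbabilityMeasure_map (hmeas 0).aemeasurable
  have hbound := HasDensityLowerBoundOn.ofReal_le_measure_pi_gap (ν := ν) (r := 2 * δt) hdens
    hp.le (by positivity) (by linarith) K
  rw [← iIndepFun.map_fun_eq_pi_of_map_eq 0 (fun i => (hmeas i).aemeasurable) hindep hident,
    Measure.map_apply (measurable_pi_lambda _ hmeas) (measurableSet_setOf_fin_succ K
      measurableSet_Icc (R := fun a b => 2 * δt < dist a b)
      (measurableSet_lt measurable_const continuous_dist.measurable))] at hbound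
  simp only [Real.dist_eq, show 2 * (2 * δt) = 4 * δt by ring] at hbound
  have hle := (ENNReal.ofReal_le_iff_le_toReal (measure_ne_top _ _)).1 hbound
  have hdc : 0 < d - c := by linarith
  exact ⟨hle, hle.trans_lt' (by positivity)⟩

/-- lower bound for the probability that `W` lands in `[c,d]` at distance
more than `2δ̃` from each of `W_1, …, W_K`. -/
theorem gap_probability_lower_bound
    {Ω : Type*} [MeasurableSpace Ω] (μ : Measure Ω) [IsProbabilityMeasure μ]
    (K : ℕ) (V : Fin (K + 1) → Ω → ℝ) (c d p δt : ℝ)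
    (hmeas : ∀ i, Measurable (V i))
    (hindep : iIndepFun V μ)
    (hident : ∀ i, Measure.map (V i) μ = Measure.map (V 0) μ)
    (hcd : c < d) (hp : 0 < p)
    (hdens : ∀ s : Set ℝ, MeasurableSet s → s ⊆ Icc c d →
      ENNReal.ofReal p * volume s ≤ Measure.map (V 0) μ s)
    (hδt : 0 < δt) (hgap : 0 < d - c - 4 * δt) :
    (d - c) * p ^ (K + 1) * (d - c - 4 * δt) ^ K ≤
      (μ {ω | V 0 ω ∈ Icc c d ∧ ∀ i : Fin K, 2 * δt < |V 0 ω - V i.succ ω|}).toReal ∧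
    0 < (μ {ω | V 0 ω ∈ Icc c d ∧ ∀ i : Fin K, 2 * δt < |V 0 ω - V i.succ ω|}).toReal :=
  gap_probability_lower_bound_general μ K V c d p δt hmeas hindep hident hp hdens hδt hgap
end
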